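/- arXiv:2010.07231 — 4 statements merged into one kernel-verified Lean document; each statement's English description precedes it below -/
import Mathlib

section
/- Let Σ be a 2-regular graph with vertex set Z_{2n} ∪ {∞} such that the multiset of differences ΔΣ contains every nonzero element of Z_{2n}, and Σ + n = Σ (translation by n fixing ∞ is an automorphism). Then the n translates {Σ + i : 0 ≤ i ≤ n−1} form a 2-factorization of the complete graph K_{2n+1} on vertex set Z_{2n} ∪ {∞}, with each factor isomorphic to Σ. -/
/-!
Translation by `j` moves an edge of difference `d` to an edge of the same difference, and
moves the edges at `∞` around freely. Hence, since the differences of `Σ` cover `Z_{2n} ∖ {0}`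
and `∞` has a neighbour, every edge of `K_{2n+1}` lies in some translate `Σ + j`, and
`Σ + n = Σ` lets us take `0 ≤ j < n`. Each translate has `2n + 1` edges, as many as `Σ`,
so the `n` translates together have `n (2n + 1) = |E(K_{2n+1})|` edges; a cover of that size
is a partition.
-/

instance twoMulNeZero (n : ℕ) [NeZero n] : NeZero (2 * n) :=
  ⟨by have := NeZero.ne n; omega⟩

/-- The gTranslate `G + i` of a graph on `Z_m ∪ {∞}`: translation by `i` fixes `∞ = none`
and adds `i` to every other vertex. -/
def gTranslate {m : ℕ} (G : SimpleGraph (Option (ZMod m))) (i : ZMod m) :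
    SimpleGraph (Option (ZMod m)) where
  Adj u v := G.Adj (u.map (· - i)) (v.map (· - i))
  symm := ⟨fun _ _ h => G.adj_symm h⟩
  loopless := ⟨fun _ h => G.irrefl h⟩

instance {m : ℕ} (G : SimpleGraph (Option (ZMod m))) [h : DecidableRel G.Adj] (i : ZMod m) :
    DecidableRel (gTranslate G i).Adj := fun u v => h (u.map (· - i)) (v.map (· - i))

open Finset

namespace SimpleGraph

theorem IsRegularOfDegree.two_mul_card_edgeFinset {V : Type*} [Fintype V] [DecidableEq V]
    {G : SimpleGraph V} [DecidableRel G.Adj] {d : ℕ} (h : G.IsRegularOfDegree d) :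
    2 * #G.edgeFinset = d * Fintype.card V := by
  rw [← sum_degrees_eq_twice_card_edges, Finset.sum_congr rfl fun v _ => h.degree_eq v,
    Finset.sum_const, Finset.card_univ, smul_eq_mul, mul_comm]

theorem exists_adj_none_some {α : Type*} [Fintype α] {G : SimpleGraph (Option α)}
    [DecidableRel G.Adj] (h : 0 < G.degree none) : ∃ a, G.Adj none (some a) := by
  obtain ⟨w, hw⟩ := (G.degree_pos_iff_exists_adj none).mp h
  rcases w with _ | a
  · exact absurd hw G.irrefl
  · exact ⟨a, hw⟩

end SimpleGraph

theorem Finset.sum_val_eq_of_forall_exists_mem {ι α : Type*} (t : Finset ι) (f : ι → Finset α)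
    (s : Finset α) (hcover : ∀ a ∈ s, ∃ i ∈ t, a ∈ f i) (hcard : ∑ i ∈ t, #(f i) ≤ #s) :
    ∑ i ∈ t, (f i).val = s.val := by
  have hle : s.val ≤ ∑ i ∈ t, (f i).val := by
    rw [Multiset.le_iff_subset s.nodup]
    intro a ha
    exact Multiset.mem_sum.mpr (hcover a ha)
  refine (Multiset.eq_of_le_of_card_le hle ?_).symm
  rwa [Multiset.card_sum]

section gTranslate

variable {m : ℕ} (G : SimpleGraph (Option (ZMod m)))

@[simp]
theorem gTranslate_adj (i : ZMod m) (u v : Option (ZMod m)) :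
    (gTranslate G i).Adj u v ↔ G.Adj (u.map (· - i)) (v.map (· - i)) :=
  Iff.rfl

theorem gTranslate_gTranslate (a b : ZMod m) :
    gTranslate (gTranslate G a) b = gTranslate G (a + b) := by
  ext u v
  simp only [gTranslate_adj, Option.map_map]
  congr! 2 <;> funext x <;> simp [sub_sub, add_comm]

def gTranslateIso (i : ZMod m) : gTranslate G i ≃g G where
  toEquiv := Equiv.optionCongr (Equiv.subRight i)
  map_rel_iff' := Iff.rfl

theorem exists_gTranslate_adj
    (hdiff : ∀ d : ZMod m, d ≠ 0 → ∃ x y : ZMod m, G.Adj (some x) (some y) ∧ x - y = d)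
    (hinf : ∃ a, G.Adj none (some a)) {u v : Option (ZMod m)} (huv : u ≠ v) :
    ∃ j, (gTranslate G j).Adj u v := by
  obtain ⟨a, ha⟩ := hinf
  rcases u with _ | x <;> rcases v with _ | y
  · exact absurd rfl huv
  · exact ⟨y - a, by simpa using ha⟩
  · exact ⟨x - a, by simpa using ha.symm⟩
  · obtain ⟨a, b, hab, hd⟩ := hdiff (x - y) (sub_ne_zero.mpr fun h => huv (congrArg some h))
    refine ⟨x - a, ?_⟩
    have hy : y - (x - a) = b := by linear_combination hd
    simpa [hy] using hab

theorem exists_lt_gTranslate_eq {n : ℕ} [NeZero n] (S : SimpleGraph (Option (ZMod (2 * n))))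
    (hper : gTranslate S (n : ZMod (2 * n)) = S) (j : ZMod (2 * n)) :
    ∃ i < n, gTranslate S (i : ZMod (2 * n)) = gTranslate S j := by
  have hj : j.val < 2 * n := ZMod.val_lt j
  by_cases h : j.val < n
  · exact ⟨j.val, h, by rw [ZMod.natCast_zmod_val]⟩
  · refine ⟨j.val - n, by omega, ?_⟩
    have hsplit : (n : ZMod (2 * n)) + ((j.val - n : ℕ) : ZMod (2 * n)) = j := by
      rw [Nat.cast_sub (not_lt.mp h), ZMod.natCast_zmod_val]
      ring
    calc gTranslate S ((j.val - n : ℕ) : ZMod (2 * n))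
        = gTranslate (gTranslate S n) ((j.val - n : ℕ) : ZMod (2 * n)) := by rw [hper]
      _ = gTranslate S j := by rw [gTranslate_gTranslate, hsplit]

end gTranslate

/-- a 2-starter `S` over `Z_{2n}` (2-regular, differences covering all nonzero
elements, invariant under translation by `n`) yields, via its `n` translates, a
2-factorization of the complete graph on `Z_{2n} ∪ {∞}`, each factor isomorphic to `S`. -/
theorem stmt3 (n : ℕ) [NeZero n] (S : SimpleGraph (Option (ZMod (2 * n))))
    [DecidableRel S.Adj]
    (h2reg : ∀ v, S.degree v = 2)
    (hdiff : ∀ d : ZMod (2 * n), d ≠ 0 →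
      ∃ x y : ZMod (2 * n), S.Adj (some x) (some y) ∧ x - y = d)
    (hper : gTranslate S ((n : ℕ) : ZMod (2 * n)) = S) :
    (∑ i ∈ Finset.range n, (gTranslate S ((i : ℕ) : ZMod (2 * n))).edgeFinset.val)
        = (⊤ : SimpleGraph (Option (ZMod (2 * n)))).edgeFinset.val ∧
    (∀ i ∈ Finset.range n, ∀ v, (gTranslate S ((i : ℕ) : ZMod (2 * n))).degree v = 2) ∧
    (∀ i ∈ Finset.range n, Nonempty (gTranslate S ((i : ℕ) : ZMod (2 * n)) ≃g S)) := by
  have hcardV : Fintype.card (Option (ZMod (2 * n))) = 2 * n + 1 := by simp [ZMod.card]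
  have hinf := SimpleGraph.exists_adj_none_some (G := S) (by rw [h2reg]; norm_num)
  have hcardE : ∀ j : ZMod (2 * n), #(gTranslate S j).edgeFinset = 2 * n + 1 := by
    intro j
    have := SimpleGraph.IsRegularOfDegree.two_mul_card_edgeFinset (G := S) h2reg
    rw [(gTranslateIso S j).card_edgeFinset_eq]
    omega
  refine ⟨Finset.sum_val_eq_of_forall_exists_mem _ _ _ ?_ ?_,
    fun i _ v => by rw [← (gTranslateIso S _).degree_eq, h2reg],
    fun i _ => ⟨gTranslateIso S _⟩⟩
  · intro e he
    induction e using Sym2.ind with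
    | _ u v =>
      obtain ⟨j, hj⟩ := exists_gTranslate_adj S hdiff hinf (by simpa using he)
      obtain ⟨i, hi, hij⟩ := exists_lt_gTranslate_eq S hper j
      exact ⟨i, Finset.mem_range.mpr hi, by simpa [hij] using hj⟩
  · rw [SimpleGraph.card_edgeFinset_top_eq_card_choose_two, hcardV, Nat.choose_two_right]
    simp only [hcardE, Finset.sum_const, Finset.card_range, smul_eq_mul]
    rw [Nat.add_sub_cancel, show (2 * n + 1) * (2 * n) = n * (2 * n + 1) * 2 by ring,
      Nat.mul_div_cancel _ two_pos]
end

section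
/- Let Σ be a 2-starter over Z_{2n}, and let C_∞ be the cycle of Σ through the vertex ∞. Then C_∞ has odd length, and the translation by n acts on C_∞ as a reflection; consequently Σ is a single-flip 2-regular graph. -/
/-- `f` (an involutory automorphism) acts as a reflection on the component `c`:
it fixes `c` setwise, is not the identity on `c`, and fixes a vertex or an edge of `c`. -/
def FlipsOn {V : Type*} (G : SimpleGraph V) (f : V → V) (c : G.ConnectedComponent) : Prop :=
  (∀ v ∈ c.supp, f v ∈ c.supp) ∧ (∃ v ∈ c.supp, f v ≠ v) ∧
    ((∃ v ∈ c.supp, f v = v) ∨ (∃ v ∈ c.supp, G.Adj v (f v)))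

/-- A graph is single-flip if it has an involutory automorphism acting as a reflection on
exactly one of its connected components (cycles, in the 2-regular case). -/
def IsSingleFlip {V : Type*} (G : SimpleGraph V) : Prop :=
  ∃ f : V → V, (∀ u v, G.Adj u v ↔ G.Adj (f u) (f v)) ∧ (∀ v, f (f v) = v) ∧
    ∃! c : G.ConnectedComponent, FlipsOn G f c

set_option linter.unusedSectionVars false



lemma parity_lemma {α : Type*} [DecidableEq α] (f : α → α) :
    ∀ s : Finset α, (∀ x ∈ s, f x ∈ s) → (∀ x ∈ s, f (f x) = x) →
    (s.filter fun x => f x = x).card % 2 = s.card % 2 := by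
  intro s
  induction s using Finset.strongInduction with
  | _ s ih =>
    intro hmem hinv
    by_cases h : ∀ x ∈ s, f x = x
    · rw [Finset.filter_true_of_mem h]
    · push_neg at h
      obtain ⟨a, ha, hfa⟩ := h
      have hfa' : f a ∈ s := hmem a ha
      have hffa : f (f a) = a := hinv a ha
      have hsub : ({a, f a} : Finset α) ⊆ s := by
        simp [Finset.insert_subset_iff, ha, hfa']
      have h2 : ({a, f a} : Finset α).card = 2 := Finset.card_pair (Ne.symm hfa)
      set t := s \ {a, f a} with ht
      have hss : t ⊂ s := Finset.sdiff_ssubset hsub (by simp)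
      have hle : 2 ≤ s.card := h2 ▸ Finset.card_le_card hsub
      have hcard : s.card = t.card + 2 := by
        rw [ht, Finset.card_sdiff_of_subset hsub, h2]; omega
      have htmem : ∀ x ∈ t, f x ∈ t := by
        intro x hx
        simp only [ht, Finset.mem_sdiff, Finset.mem_insert, Finset.mem_singleton,
          not_or] at hx ⊢
        refine ⟨hmem x hx.1, ?_, ?_⟩
        · intro hc; exact hx.2.2 (by rw [← hc, hinv x hx.1])
        · intro hc
          apply hx.2.1
          have := congrArg f hc
          rwa [hinv x hx.1, hffa] at this
      have htinv : ∀ x ∈ t, f (f x) = x := fun x hx => hinv x (Finset.mem_sdiff.mp hx).1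
      have hfil : s.filter (fun x => f x = x) = t.filter (fun x => f x = x) := by
        ext x
        simp only [ht, Finset.mem_filter, Finset.mem_sdiff, Finset.mem_insert,
          Finset.mem_singleton, not_or]
        constructor
        · rintro ⟨hx, hfx⟩
          refine ⟨⟨hx, ?_, ?_⟩, hfx⟩
          · rintro rfl; exact hfa hfx
          · rintro rfl; exact hfa (hffa.symm.trans hfx).symm
        · rintro ⟨⟨hx, _⟩, hfx⟩; exact ⟨hx, hfx⟩
      rw [hfil, ih t hss htmem htinv]
      omega

section Main
variable {n : ℕ} [NeZero n]

local notation "m" => ((n : ℕ) : ZMod (2 * n))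
local notation "V" => Option (ZMod (2 * n))

lemma mcast_ne_zero : (m : ZMod (2*n)) ≠ 0 := by
  have h := NeZero.ne n
  intro hc
  rw [ZMod.natCast_eq_zero_iff] at hc
  have := Nat.le_of_dvd (Nat.pos_of_ne_zero h) hc
  omega

lemma mcast_add_self : (m : ZMod (2*n)) + m = 0 := by
  rw [← Nat.cast_add]
  have h : n + n = 2 * n := by omega
  rw [h, ZMod.natCast_self]

lemma neg_mcast : -(m : ZMod (2*n)) = m := neg_eq_of_add_eq_zero_left mcast_add_self

/-- the translation -/
def tr : (V : Type) → V := fun v => v.map (· + m)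

lemma tr_none : tr (n := n) none = none := rfl
lemma tr_some (x : ZMod (2*n)) : tr (n := n) (some x) = some (x + m) := rfl

lemma tr_tr (v : V) : tr (n := n) (tr v) = v := by
  cases v with
  | none => rfl
  | some x => simp [tr, add_assoc, mcast_add_self]

lemma tr_fix_iff (v : V) : tr (n := n) v = v ↔ v = none := by
  cases v with
  | none => simp [tr]
  | some x =>
    simp only [tr, Option.map_some, Option.some.injEq, reduceCtorEq, iff_false]
    intro h
    exact mcast_ne_zero (n := n) (add_left_cancel (a := x) (by rw [add_zero]; exact h))
end Main

section Main2
variable {n : ℕ} [NeZero n]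

local notation "m" => ((n : ℕ) : ZMod (2 * n))
local notation "V" => Option (ZMod (2 * n))

/-- difference pair of an edge -/
def diffPair : Sym2 V → Sym2 (ZMod (2 * n)) :=
  Sym2.lift ⟨fun u v => s((u.getD 0) - (v.getD 0), (v.getD 0) - (u.getD 0)),
    fun _ _ => Sym2.eq_swap⟩

lemma diffPair_mk (u v : V) :
    diffPair s(u, v) = s((u.getD 0) - (v.getD 0), (v.getD 0) - (u.getD 0)) := rfl

lemma diffPair_some (x y : ZMod (2 * n)) :
    diffPair s(some x, some y) = s(x - y, y - x) := rfl

lemma diffPair_tr (x y : ZMod (2 * n)) :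
    diffPair (Sym2.map (tr (n := n)) s(some x, some y)) = diffPair s(some x, some y) := by
  rw [Sym2.map_pair_eq, tr_some, tr_some, diffPair_some, diffPair_some,
    add_sub_add_right_eq_sub, add_sub_add_right_eq_sub]

lemma trm_trm (e : Sym2 V) : Sym2.map (tr (n := n)) (Sym2.map (tr (n := n)) e) = e := by
  induction e using Sym2.ind with
  | _ u v => rw [Sym2.map_pair_eq, Sym2.map_pair_eq, tr_tr, tr_tr]

lemma trm_fixed_iff (u v : V) (hne : u ≠ v) :
    Sym2.map (tr (n := n)) s(u, v) = s(u, v) ↔ tr (n := n) u = v ∧ tr (n := n) v = u := by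
  rw [Sym2.map_pair_eq, Sym2.eq_iff]
  constructor
  · rintro (⟨h1, h2⟩ | h)
    · exact absurd (((tr_fix_iff u).mp h1).trans ((tr_fix_iff v).mp h2).symm) hne
    · exact h
  · exact Or.inr

end Main2

section Main3
variable {n : ℕ} [NeZero n]

local notation "m" => ((n : ℕ) : ZMod (2 * n))
local notation "V" => Option (ZMod (2 * n))

variable (S : SimpleGraph (Option (ZMod (2 * n)))) [DecidableRel S.Adj]

lemma deg_eq_two (h2reg : ∀ v, Nat.card (S.neighborSet v) = 2) (v : V) : S.degree v = 2 := by
  have h := h2reg v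
  rwa [Nat.card_eq_fintype_card, SimpleGraph.card_neighborSet_eq_degree] at h

lemma total_edges (h2reg : ∀ v, Nat.card (S.neighborSet v) = 2) :
    S.edgeFinset.card = 2 * n + 1 := by
  have h := S.sum_degrees_eq_twice_card_edges
  rw [Finset.sum_congr rfl (fun v _ => deg_eq_two S h2reg v), Finset.sum_const,
    Finset.card_univ] at h
  have hV : Fintype.card V = 2 * n + 1 := by
    rw [Fintype.card_option, ZMod.card]
  rw [hV, smul_eq_mul] at h
  omega
end Main3

section Main4
variable {n : ℕ} [NeZero n]

local notation "m" => ((n : ℕ) : ZMod (2 * n))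
local notation "V" => Option (ZMod (2 * n))

variable (S : SimpleGraph (Option (ZMod (2 * n)))) [DecidableRel S.Adj]

lemma internal_card (h2reg : ∀ v, Nat.card (S.neighborSet v) = 2) :
    (S.edgeFinset.filter (fun e => ¬ none ∈ e)).card = 2 * n - 1 := by
  classical
  have h := Finset.card_filter_add_card_filter_not
    (s := S.edgeFinset) (p := fun e => none ∈ e)
  have hinc : (S.edgeFinset.filter (fun e => none ∈ e)).card = 2 := by
    rw [← SimpleGraph.incidenceFinset_eq_filter, SimpleGraph.card_incidenceFinset_eq_degree]
    exact deg_eq_two S h2reg none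
  rw [hinc, total_edges S h2reg] at h
  omega

lemma mem_internal {x y : ZMod (2 * n)} (hxy : S.Adj (some x) (some y)) :
    s((some x : V), some y) ∈ S.edgeFinset.filter (fun e => ¬ none ∈ e) := by
  rw [Finset.mem_filter, SimpleGraph.mem_edgeFinset, SimpleGraph.mem_edgeSet]
  exact ⟨hxy, by simp [Sym2.mem_iff]⟩

lemma internal_split : ∀ e ∈ S.edgeFinset.filter (fun e => ¬ none ∈ e),
    ∃ x y : ZMod (2 * n), e = s(some x, some y) ∧ S.Adj (some x) (some y) := by
  intro e
  induction e using Sym2.ind with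
  | _ u v =>
    intro he
    rw [Finset.mem_filter, SimpleGraph.mem_edgeFinset, SimpleGraph.mem_edgeSet] at he
    obtain ⟨he1, he2⟩ := he
    match u, v with
    | none, v => exact absurd (Sym2.mem_mk_left _ _) he2
    | some x, none => exact absurd (Sym2.mem_mk_right _ _) he2
    | some x, some y => exact ⟨x, y, rfl, he1⟩

lemma internal_tr (hper : ∀ u v, S.Adj u v ↔
      S.Adj (u.map (· + ((n : ℕ) : ZMod (2 * n)))) (v.map (· + ((n : ℕ) : ZMod (2 * n))))) :
    ∀ e ∈ S.edgeFinset.filter (fun e => ¬ none ∈ e),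
      Sym2.map (tr (n := n)) e ∈ S.edgeFinset.filter (fun e => ¬ none ∈ e) := by
  intro e he
  obtain ⟨x, y, rfl, hadj⟩ := internal_split S e he
  rw [Sym2.map_pair_eq, tr_some, tr_some]
  exact mem_internal S ((hper (some x) (some y)).mp hadj)

lemma fixed_iff_diffPair : ∀ e ∈ S.edgeFinset.filter (fun e => ¬ none ∈ e),
    (Sym2.map (tr (n := n)) e = e ↔ diffPair e = s(m, m)) := by
  intro e he
  obtain ⟨x, y, rfl, hadj⟩ := internal_split S e he
  have hne : (some x : V) ≠ some y := hadj.ne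
  rw [trm_fixed_iff _ _ hne, diffPair_some, tr_some, tr_some]
  constructor
  · rintro ⟨h1, -⟩
    rw [Option.some_inj] at h1
    subst h1
    have h1 : x - (x + m) = -m := by ring
    have h2 : x + m - x = m := by ring
    rw [h1, h2, neg_mcast]
  · intro h
    rcases Sym2.eq_iff.mp h with ⟨h1, h2⟩ | ⟨h1, h2⟩ <;>
    · have hy : y = x + m := by
        have := h2
        rw [sub_eq_iff_eq_add] at this
        rw [this, add_comm]
      subst hy
      refine ⟨rfl, ?_⟩
      rw [Option.some_inj, add_assoc, mcast_add_self, add_zero]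

lemma nedge_card_le_one
    (h2reg : ∀ v, Nat.card (S.neighborSet v) = 2)
    (hdiff : ∀ d : ZMod (2 * n), d ≠ 0 →
      ∃ x y : ZMod (2 * n), S.Adj (some x) (some y) ∧ x - y = d)
    (hper : ∀ u v, S.Adj u v ↔
      S.Adj (u.map (· + ((n : ℕ) : ZMod (2 * n)))) (v.map (· + ((n : ℕ) : ZMod (2 * n))))) :
    ((S.edgeFinset.filter (fun e => ¬ none ∈ e)).filter
      (fun e => Sym2.map (tr (n := n)) e = e)).card ≤ 1 := by
  classical
  set I := S.edgeFinset.filter (fun e => ¬ none ∈ e) with hI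
  set D : Finset (ZMod (2 * n)) := Finset.univ.filter (· ≠ 0) with hDdef
  have hD : D.card = 2 * n - 1 := by
    rw [hDdef, Finset.filter_ne', Finset.card_erase_of_mem (Finset.mem_univ _),
      Finset.card_univ, ZMod.card]
  set P := D.image (fun d => s(d, -d)) with hPdef
  have hP : n ≤ P.card := by
    have hfib : ∀ p ∈ D.image (fun d => s(d, -d)),
        (D.filter (fun d => s(d, -d) = p)).card ≤ 2 := by
      intro p hp
      obtain ⟨d₀, _, rfl⟩ := Finset.mem_image.mp hp
      refine le_trans (Finset.card_le_card (fun d hd => ?_))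
        ((Finset.card_insert_le d₀ {-d₀}).trans (by simp))
      rw [Finset.mem_filter] at hd
      rcases Sym2.eq_iff.mp hd.2 with ⟨h, -⟩ | ⟨h, -⟩ <;> simp [h]
    have := Finset.card_le_mul_card_image D 2 hfib
    rw [hD] at this
    rw [hPdef]
    omega
  have hfib_ne : ∀ p ∈ P, (I.filter (fun e => diffPair e = p)).Nonempty := by
    intro p hp
    obtain ⟨d, hd, rfl⟩ := Finset.mem_image.mp hp
    rw [hDdef, Finset.mem_filter] at hd
    obtain ⟨x, y, hadj, hxy⟩ := hdiff d hd.2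
    refine ⟨s(some x, some y), Finset.mem_filter.mpr ⟨mem_internal S hadj, ?_⟩⟩
    rw [diffPair_some, hxy, ← hxy, ← neg_sub x y, hxy]
  have hmP : s(m, m) ∈ P := by
    rw [hPdef]
    refine Finset.mem_image.mpr ⟨m, ?_, by rw [neg_mcast]⟩
    rw [hDdef, Finset.mem_filter]
    exact ⟨Finset.mem_univ _, mcast_ne_zero⟩
  have hfib_even : ∀ p ∈ P, p ≠ s(m, m) → 2 ≤ (I.filter (fun e => diffPair e = p)).card := by
    intro p hp hpne
    have hne := hfib_ne p hp
    have hpar := parity_lemma (Sym2.map (tr (n := n))) (I.filter (fun e => diffPair e = p))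
      (by
        intro e he
        rw [Finset.mem_filter] at he ⊢
        obtain ⟨x, y, heq, hadj⟩ := internal_split S e he.1
        refine ⟨internal_tr S hper e he.1, ?_⟩
        rw [heq, diffPair_tr, ← heq, he.2])
      (fun e _ => trm_trm e)
    have hzero : ((I.filter (fun e => diffPair e = p)).filter
        (fun e => Sym2.map (tr (n := n)) e = e)) = ∅ := by
      rw [Finset.filter_eq_empty_iff]
      intro e he hfx
      rw [Finset.mem_filter] at he
      exact hpne (he.2 ▸ (fixed_iff_diffPair S e he.1).mp hfx)
    rw [hzero] at hpar
    have hc := Finset.card_pos.mpr hne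
    simp only [Finset.card_empty] at hpar
    omega
  have hsum : I.card = ∑ p ∈ I.image diffPair, (I.filter (fun e => diffPair e = p)).card :=
    Finset.card_eq_sum_card_fiberwise (fun e he => Finset.mem_image_of_mem _ he)
  have hPsub : P ⊆ I.image diffPair := by
    intro p hp
    obtain ⟨e, he⟩ := hfib_ne p hp
    rw [Finset.mem_filter] at he
    exact Finset.mem_image.mpr ⟨e, he.1, he.2⟩
  have h1 : ∑ p ∈ P, (I.filter (fun e => diffPair e = p)).card ≤ I.card := by
    rw [hsum]
    exact Finset.sum_le_sum_of_subset hPsub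
  have h2 : ∑ p ∈ P, (I.filter (fun e => diffPair e = p)).card
      = (I.filter (fun e => diffPair e = s(m, m))).card
        + ∑ p ∈ P.erase s(m, m), (I.filter (fun e => diffPair e = p)).card :=
    (Finset.add_sum_erase P _ hmP).symm
  have h3 : (P.erase s(m, m)).card * 2
      ≤ ∑ p ∈ P.erase s(m, m), (I.filter (fun e => diffPair e = p)).card := by
    have := Finset.card_nsmul_le_sum (P.erase s(m, m))
      (fun p => (I.filter (fun e => diffPair e = p)).card) 2
      (fun p hp => hfib_even p (Finset.mem_of_mem_erase hp) (Finset.ne_of_mem_erase hp))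
    rw [smul_eq_mul] at this
    omega
  have h4 : (P.erase s(m, m)).card = P.card - 1 := Finset.card_erase_of_mem hmP
  have h5 : I.filter (fun e => Sym2.map (tr (n := n)) e = e)
      = I.filter (fun e => diffPair e = s(m, m)) :=
    Finset.filter_congr (fun e he => fixed_iff_diffPair S e he)
  have h6 := internal_card S h2reg
  rw [← hI] at h6
  rw [h5]
  omega

end Main4

section Main5
variable {n : ℕ} [NeZero n]

local notation "m" => ((n : ℕ) : ZMod (2 * n))
local notation "V" => Option (ZMod (2 * n))

variable (S : SimpleGraph (Option (ZMod (2 * n)))) [DecidableRel S.Adj]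

lemma tr_mem_supp (hper : ∀ u v, S.Adj u v ↔
      S.Adj (u.map (· + ((n : ℕ) : ZMod (2 * n)))) (v.map (· + ((n : ℕ) : ZMod (2 * n))))) :
    ∀ v ∈ (S.connectedComponentMk none).supp,
      tr (n := n) v ∈ (S.connectedComponentMk none).supp := by
  intro v hv
  rw [SimpleGraph.ConnectedComponent.mem_supp_iff, SimpleGraph.ConnectedComponent.eq] at hv ⊢
  exact hv.map (⟨tr (n := n), fun {u w} h => (hper u w).mp h⟩ : S →g S)

lemma edge_tr (hper : ∀ u v, S.Adj u v ↔
      S.Adj (u.map (· + ((n : ℕ) : ZMod (2 * n)))) (v.map (· + ((n : ℕ) : ZMod (2 * n))))) :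
    ∀ e ∈ S.edgeFinset, Sym2.map (tr (n := n)) e ∈ S.edgeFinset := by
  intro e
  induction e using Sym2.ind with
  | _ u v =>
    intro he
    rw [SimpleGraph.mem_edgeFinset, SimpleGraph.mem_edgeSet] at he
    rw [Sym2.map_pair_eq, SimpleGraph.mem_edgeFinset, SimpleGraph.mem_edgeSet]
    exact (hper u v).mp he

lemma comp_edge_card (h2reg : ∀ v, Nat.card (S.neighborSet v) = 2)
    (c : S.ConnectedComponent) :
    (S.edgeFinset.filter (fun e => ∀ v ∈ e, v ∈ c.supp)).card = c.supp.toFinset.card := by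
  classical
  set T := c.supp.toFinset with hT
  have key : ∀ e ∈ S.edgeFinset,
      (T.filter (· ∈ e)).card = if (∀ v ∈ e, v ∈ c.supp) then 2 else 0 := by
    intro e
    induction e using Sym2.ind with
    | _ a b =>
      intro he
      rw [SimpleGraph.mem_edgeFinset, SimpleGraph.mem_edgeSet] at he
      have hab : a ≠ b := he.ne
      have hcomp : a ∈ c.supp ↔ b ∈ c.supp := by
        rw [SimpleGraph.ConnectedComponent.mem_supp_iff,
          SimpleGraph.ConnectedComponent.mem_supp_iff]
        constructor
        · intro h; rw [← h, SimpleGraph.ConnectedComponent.eq]; exact he.symm.reachable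
        · intro h; rw [← h, SimpleGraph.ConnectedComponent.eq]; exact he.reachable
      by_cases ha : a ∈ c.supp
      · have hb : b ∈ c.supp := hcomp.mp ha
        have hfil : T.filter (· ∈ s(a, b)) = {a, b} := by
          ext x
          simp only [hT, Finset.mem_filter, Set.mem_toFinset, Sym2.mem_iff,
            Finset.mem_insert, Finset.mem_singleton]
          constructor
          · rintro ⟨-, h⟩; exact h
          · rintro (rfl | rfl)
            · exact ⟨ha, Or.inl rfl⟩
            · exact ⟨hb, Or.inr rfl⟩
        rw [hfil, if_pos]
        · exact Finset.card_pair hab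
        · intro v hv
          rcases Sym2.mem_iff.mp hv with rfl | rfl
          · exact ha
          · exact hb
      · have hb : b ∉ c.supp := fun h => ha (hcomp.mpr h)
        have hfil : T.filter (· ∈ s(a, b)) = ∅ := by
          rw [Finset.filter_eq_empty_iff]
          intro x hx hmem
          rcases Sym2.mem_iff.mp hmem with rfl | rfl
          · exact ha (Set.mem_toFinset.mp hx)
          · exact hb (Set.mem_toFinset.mp hx)
        rw [hfil, if_neg]
        · simp
        · intro h
          exact ha (h a (Sym2.mem_mk_left a b))
  have lhs : ∑ v ∈ T, S.degree v = 2 * T.card := by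
    rw [Finset.sum_congr rfl (fun v _ => deg_eq_two S h2reg v), Finset.sum_const,
      smul_eq_mul]
    ring
  have rhs : ∑ v ∈ T, S.degree v
      = 2 * (S.edgeFinset.filter (fun e => ∀ v ∈ e, v ∈ c.supp)).card := by
    have hdeg : ∀ v, S.degree v = (S.edgeFinset.filter (fun e => v ∈ e)).card := by
      intro v
      rw [← SimpleGraph.incidenceFinset_eq_filter, SimpleGraph.card_incidenceFinset_eq_degree]
    calc ∑ v ∈ T, S.degree v
        = ∑ v ∈ T, ∑ e ∈ S.edgeFinset, (if v ∈ e then 1 else 0) := by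
          refine Finset.sum_congr rfl (fun v _ => ?_)
          rw [hdeg v, Finset.card_filter]
      _ = ∑ e ∈ S.edgeFinset, ∑ v ∈ T, (if v ∈ e then 1 else 0) := Finset.sum_comm
      _ = ∑ e ∈ S.edgeFinset, (T.filter (· ∈ e)).card := by
          refine Finset.sum_congr rfl (fun e _ => ?_)
          rw [Finset.card_filter]
      _ = ∑ e ∈ S.edgeFinset, (if (∀ v ∈ e, v ∈ c.supp) then 2 else 0) :=
          Finset.sum_congr rfl key
      _ = ∑ e ∈ S.edgeFinset.filter (fun e => ∀ v ∈ e, v ∈ c.supp), 2 :=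
          (Finset.sum_filter _ _).symm
      _ = 2 * (S.edgeFinset.filter (fun e => ∀ v ∈ e, v ∈ c.supp)).card := by
          rw [Finset.sum_const, smul_eq_mul]; ring
  omega

lemma supp_odd (hper : ∀ u v, S.Adj u v ↔
      S.Adj (u.map (· + ((n : ℕ) : ZMod (2 * n)))) (v.map (· + ((n : ℕ) : ZMod (2 * n))))) :
    Nat.card (S.connectedComponentMk none).supp % 2 = 1 := by
  classical
  have hnc : Nat.card (S.connectedComponentMk (none : V)).supp
      = (S.connectedComponentMk (none : V)).supp.toFinset.card := by
    rw [Nat.card_eq_fintype_card, Set.toFinset_card]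
  rw [hnc]
  set T := (S.connectedComponentMk none).supp.toFinset with hT
  have hpar := parity_lemma (tr (n := n)) T
    (fun v hv => Set.mem_toFinset.mpr
      (tr_mem_supp S hper v (Set.mem_toFinset.mp hv)))
    (fun v _ => tr_tr v)
  have hfil : T.filter (fun x => tr (n := n) x = x) = {none} := by
    ext x
    simp only [Finset.mem_filter, Finset.mem_singleton, hT, Set.mem_toFinset]
    constructor
    · rintro ⟨-, h⟩; exact (tr_fix_iff x).mp h
    · rintro rfl
      exact ⟨SimpleGraph.ConnectedComponent.mem_supp_iff _ _ |>.mpr rfl, rfl⟩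
  rw [hfil] at hpar
  simp only [Finset.card_singleton] at hpar
  omega

lemma nedge_in_comp (h2reg : ∀ v, Nat.card (S.neighborSet v) = 2)
    (hper : ∀ u v, S.Adj u v ↔
      S.Adj (u.map (· + ((n : ℕ) : ZMod (2 * n)))) (v.map (· + ((n : ℕ) : ZMod (2 * n))))) :
    ∃ x : ZMod (2 * n), some x ∈ (S.connectedComponentMk none).supp ∧
      S.Adj (some x) (some (x + m)) := by
  classical
  set c := S.connectedComponentMk (none : V) with hc
  set Ec := S.edgeFinset.filter (fun e => ∀ v ∈ e, v ∈ c.supp) with hEc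
  have hodd : Ec.card % 2 = 1 := by
    rw [hEc, comp_edge_card S h2reg c]
    have hnc : Nat.card (S.connectedComponentMk (none : V)).supp
        = (S.connectedComponentMk (none : V)).supp.toFinset.card := by
      rw [Nat.card_eq_fintype_card, Set.toFinset_card]
    have := supp_odd S hper
    rw [hnc] at this
    exact this
  have hpar := parity_lemma (Sym2.map (tr (n := n))) Ec
    (by
      intro e he
      rw [hEc, Finset.mem_filter] at he ⊢
      refine ⟨edge_tr S hper e he.1, ?_⟩
      intro v hv
      rw [Sym2.mem_map] at hv
      obtain ⟨u, hu, rfl⟩ := hv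
      exact tr_mem_supp S hper u (he.2 u hu))
    (fun e _ => trm_trm e)
  have hne : (Ec.filter (fun e => Sym2.map (tr (n := n)) e = e)).Nonempty := by
    rw [← Finset.card_pos]
    omega
  obtain ⟨e, he⟩ := hne
  rw [Finset.mem_filter, hEc, Finset.mem_filter] at he
  obtain ⟨⟨hedge, hin⟩, hfix⟩ := he
  revert hedge hin hfix
  induction e using Sym2.ind with
  | _ u v =>
    intro hfix hedge hin
    rw [SimpleGraph.mem_edgeFinset, SimpleGraph.mem_edgeSet] at hedge
    rw [trm_fixed_iff u v hedge.ne] at hfix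
    obtain ⟨h1, h2⟩ := hfix
    match u with
    | none =>
      exfalso
      rw [tr_none] at h1
      rw [← h1] at hedge
      exact hedge.ne rfl
    | some x =>
      rw [tr_some] at h1
      refine ⟨x, hin (some x) (Sym2.mem_mk_left _ _), ?_⟩
      rw [h1]
      exact hedge

end Main5



/-- in a 2-starter over `Z_{2n}`, the cycle through `∞ = none` has odd length,
translation by `n` acts on it as a reflection, and the 2-starter is single-flip. -/
theorem stmt4 (n : ℕ) [NeZero n] (S : SimpleGraph (Option (ZMod (2 * n))))
    (h2reg : ∀ v, Nat.card (S.neighborSet v) = 2)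
    (hdiff : ∀ d : ZMod (2 * n), d ≠ 0 →
      ∃ x y : ZMod (2 * n), S.Adj (some x) (some y) ∧ x - y = d)
    (hper : ∀ u v, S.Adj u v ↔
      S.Adj (u.map (· + ((n : ℕ) : ZMod (2 * n)))) (v.map (· + ((n : ℕ) : ZMod (2 * n))))) :
    Odd (Nat.card (S.connectedComponentMk none).supp) ∧
    FlipsOn S (fun v => v.map (· + ((n : ℕ) : ZMod (2 * n)))) (S.connectedComponentMk none) ∧
    IsSingleFlip S := by
  classical
  have hflips : FlipsOn S (tr (n := n)) (S.connectedComponentMk none) := by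
    refine ⟨tr_mem_supp S hper, ?_, Or.inl ⟨none,
      (SimpleGraph.ConnectedComponent.mem_supp_iff _ _).mpr rfl, rfl⟩⟩
    have hdegnone : 0 < S.degree (none : Option (ZMod (2 * n))) := by
      rw [deg_eq_two S h2reg]; norm_num
    obtain ⟨w, hw⟩ := (SimpleGraph.degree_pos_iff_exists_adj _ _).mp hdegnone
    have hwne : w ≠ none := fun h => S.irrefl (h ▸ hw)
    refine ⟨w, ?_, fun h => hwne ((tr_fix_iff w).mp h)⟩
    rw [SimpleGraph.ConnectedComponent.mem_supp_iff, SimpleGraph.ConnectedComponent.eq]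
    exact hw.symm.reachable
  have huniq : ∀ c : S.ConnectedComponent,
      FlipsOn S (tr (n := n)) c → c = S.connectedComponentMk none := by
    intro c hc
    obtain ⟨hcinv, -, hfix⟩ := hc
    rcases hfix with ⟨w, hw, hww⟩ | ⟨w, hw, hadj⟩
    · have hwn : w = none := (tr_fix_iff w).mp hww
      subst hwn
      exact ((SimpleGraph.ConnectedComponent.mem_supp_iff _ _).mp hw).symm
    · match w with
      | none => exact absurd hadj (S.irrefl)
      | some x =>
        have hadj' : S.Adj (some x) (some (x + ((n : ℕ) : ZMod (2 * n)))) := hadj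
        obtain ⟨y, hy, hyadj⟩ := nedge_in_comp S h2reg hper
        have hkey := nedge_card_le_one S h2reg hdiff hper
        have hmemN : ∀ z : ZMod (2 * n), S.Adj (some z) (some (z + ((n : ℕ) : ZMod (2 * n)))) →
            s((some z : Option (ZMod (2 * n))), some (z + ((n : ℕ) : ZMod (2 * n))))
              ∈ (S.edgeFinset.filter (fun e => ¬ none ∈ e)).filter
                (fun e => Sym2.map (tr (n := n)) e = e) := by
          intro z hz
          refine Finset.mem_filter.mpr ⟨mem_internal S hz, ?_⟩
          rw [trm_fixed_iff _ _ hz.ne]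
          exact ⟨rfl, by rw [tr_some, add_assoc, mcast_add_self, add_zero]⟩
        have heq := Finset.card_le_one.mp hkey _ (hmemN x hadj') _ (hmemN y hyadj)
        have hxsupp : (some x : Option (ZMod (2 * n)))
            ∈ (S.connectedComponentMk none).supp := by
          rcases Sym2.eq_iff.mp heq with ⟨h1, -⟩ | ⟨h1, -⟩
          · rw [h1]; exact hy
          · rw [h1]
            exact tr_mem_supp S hper (some y) hy
        rw [← (SimpleGraph.ConnectedComponent.mem_supp_iff _ _).mp hw,
          ← (SimpleGraph.ConnectedComponent.mem_supp_iff _ _).mp hxsupp]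
  refine ⟨?_, hflips, ?_⟩
  · rw [Nat.odd_iff]
    exact supp_odd S hper
  · exact ⟨tr (n := n), hper, tr_tr, ⟨S.connectedComponentMk none, hflips, huniq⟩⟩
end

section
/- Let γ₁, γ₂ be nonnegative integers with γ₁ = γ₂ and let w₁, w₂ be integers with w₁ + γ₁ < w₂. For every i with 0 ≤ i ≤ γ₁, there exists a path P with γ₁ + γ₂ + 1 vertices and end-vertices w₁+i and w₂+i, whose vertices alternate between the intervals J₁ = [w₁, w₁+γ₁] and J₂ = [w₂, w₂+γ₂], using each element of J₁ ∪ J₂ exactly once, and whose multiset of edge differences (larger endpoint minus smaller) equals exactly the set of integers from w₂ − (w₁+γ₁) to (w₂+γ₂) − w₁. -/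
/-!
Translate `J₁` and `J₂` to `[0, n]`, `n = γ₁`. A path alternating between them is a list of rungs
`(aₖ, bₖ)`, and its edge differences are the signed differences `bₖ - aₖ`, `bₖ - aₖ₊₁` shifted by
`w₂ - w₁ > n`; so the signed differences must form `[-n, n]`, with `a₀ = bₙ = i`. For `i = n` the
zigzag `(n - k, k)` works, and for `n = 2i` two shifted zigzags glued at the rung `(0, 0)`. For
`2i < n`, a solution for `(n - i - 1, i)` with its `b`'s raised by `i + 1`, followed by a zigzag for
`i` with its `a`'s raised by `n - i`, is a solution for `(n, i)`. The reflection `x ↦ n - x`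
exchanges `i` and `n - i`, and strong induction on `n` covers every `i`.
-/

/-- Edges of a path given by the list of its vertices. -/
def pathEdges (l : List ℤ) : Multiset (ℤ × ℤ) := ↑(l.zip l.tail)

/-- Absolute edge differences of a multiset of edges. -/
def diffs (E : Multiset (ℤ × ℤ)) : Multiset ℤ := E.map fun p => |p.1 - p.2|

namespace Multiset

variable {α : Type*}

lemma count_Icc [Preorder α] [LocallyFiniteOrder α] [DecidableEq α] [DecidableLE α]
    (a b x : α) : (Icc a b).count x = if a ≤ x ∧ x ≤ b then 1 else 0 := by
  simp only [count_eq_of_nodup nodup_Icc, mem_Icc]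

variable [AddCommGroup α] [PartialOrder α] [IsOrderedAddMonoid α] [LocallyFiniteOrder α]

lemma map_sub_left_Icc (a b c : α) : (Icc a b).map (c - ·) = Icc (c - b) (c - a) := by
  refine (Nodup.ext (nodup_Icc.map sub_right_injective) nodup_Icc).2 fun x => ?_
  simp only [mem_map, mem_Icc]
  constructor
  · rintro ⟨y, ⟨hay, hyb⟩, rfl⟩
    exact ⟨sub_le_sub_left hyb c, sub_le_sub_left hay c⟩
  · rintro ⟨hbx, hxa⟩
    exact ⟨c - x, ⟨le_sub_comm.1 hxa, sub_le_comm.1 hbx⟩, sub_sub_cancel c x⟩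

lemma map_neg_Icc (a b : α) : (Icc a b).map Neg.neg = Icc (-b) (-a) := by
  simpa using map_sub_left_Icc a b 0

end Multiset

namespace PathAlphaLabeling

/-- A list of rungs `[(a₀, b₀), …, (aₘ, bₘ)]` encodes the path `a₀ b₀ a₁ b₁ … aₘ bₘ`; its signed
differences are the `bₖ - aₖ` and the `bₖ - aₖ₊₁`. -/
def signedDiffs : List (ℤ × ℤ) → Multiset ℤ
  | [] => 0
  | [p] => {p.2 - p.1}
  | p :: q :: t => (p.2 - p.1) ::ₘ (p.2 - q.1) ::ₘ signedDiffs (q :: t)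

def toPath (L : List (ℤ × ℤ)) : List ℤ := L.flatMap fun p => [p.1, p.2]

lemma signedDiffs_append {Y : List (ℤ × ℤ)} {p q : ℤ × ℤ} (hq : Y.head? = some q) :
    ∀ {X : List (ℤ × ℤ)}, X.getLast? = some p →
      signedDiffs (X ++ Y) = (p.2 - q.1) ::ₘ (signedDiffs X + signedDiffs Y)
  | [p'], hp => by
    obtain rfl : p' = p := by simpa using hp
    obtain ⟨Y, rfl⟩ : ∃ Y', Y = q :: Y' := ⟨Y.tail, List.eq_cons_of_mem_head? hq⟩
    simp only [List.cons_append, List.nil_append, signedDiffs, Multiset.singleton_add,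
      Multiset.cons_swap]
  | p' :: r :: t, hp => by
    rw [List.getLast?_cons_cons] at hp
    have ih := signedDiffs_append hq hp
    rw [List.cons_append] at ih
    simp only [List.cons_append, signedDiffs, ih, Multiset.cons_add]
    rw [Multiset.cons_swap (p'.2 - r.1), Multiset.cons_swap (p'.2 - p'.1)]

lemma signedDiffs_map (f g φ : ℤ → ℤ) (h : ∀ a b, g b - f a = φ (b - a)) :
    ∀ L : List (ℤ × ℤ), signedDiffs (L.map (Prod.map f g)) = (signedDiffs L).map φ
  | [] => rfl
  | [p] => by simp [signedDiffs, h]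
  | p :: q :: t => by
    simp [signedDiffs, h, ← signedDiffs_map f g φ h (q :: t)]

structure IsBipartitePath (L : List (ℤ × ℤ)) (A B D : Multiset ℤ) (x y : ℤ) : Prop where
  fst_eq : (L.map Prod.fst : Multiset ℤ) = A
  snd_eq : (L.map Prod.snd : Multiset ℤ) = B
  signedDiffs_eq : signedDiffs L = D
  head_fst : L.head?.map Prod.fst = some x
  getLast_snd : L.getLast?.map Prod.snd = some y

namespace IsBipartitePath

variable {L : List (ℤ × ℤ)} {A B D : Multiset ℤ} {x y : ℤ}

lemma singleton (a b : ℤ) : IsBipartitePath [(a, b)] {a} {b} {b - a} a b :=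
  ⟨rfl, rfl, rfl, rfl, rfl⟩

lemma append {L' : List (ℤ × ℤ)} {A' B' D' : Multiset ℤ} {x' y' : ℤ}
    (h : IsBipartitePath L A B D x y) (h' : IsBipartitePath L' A' B' D' x' y') :
    IsBipartitePath (L ++ L') (A + A') (B + B') ((y - x') ::ₘ (D + D')) x y' := by
  obtain ⟨p, hp, rfl⟩ := Option.map_eq_some_iff.1 h.getLast_snd
  obtain ⟨q, hq, rfl⟩ := Option.map_eq_some_iff.1 h'.head_fst
  refine ⟨?_, ?_, ?_, ?_, ?_⟩
  · rw [List.map_append, ← Multiset.coe_add, h.fst_eq, h'.fst_eq]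
  · rw [List.map_append, ← Multiset.coe_add, h.snd_eq, h'.snd_eq]
  · rw [signedDiffs_append hq hp, h.signedDiffs_eq, h'.signedDiffs_eq]
  · obtain ⟨p₀, hp₀, hx⟩ := Option.map_eq_some_iff.1 h.head_fst
    simp [List.head?_append, hp₀, hx]
  · obtain ⟨q₀, hq₀, hy⟩ := Option.map_eq_some_iff.1 h'.getLast_snd
    simp [List.getLast?_append, hq₀, hy]

lemma map (h : IsBipartitePath L A B D x y) (f g φ : ℤ → ℤ)
    (hφ : ∀ a b, g b - f a = φ (b - a)) :
    IsBipartitePath (L.map (Prod.map f g)) (A.map f) (B.map g) (D.map φ) (f x) (g y) := by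
  refine ⟨?_, ?_, ?_, ?_, ?_⟩
  · rw [← h.fst_eq, Multiset.map_coe, List.map_map, List.map_map, Prod.map_fst']
  · rw [← h.snd_eq, Multiset.map_coe, List.map_map, List.map_map, Prod.map_snd']
  · rw [signedDiffs_map f g φ hφ, h.signedDiffs_eq]
  · rw [List.head?_map, Option.map_map, Prod.map_fst', ← Option.map_map, h.head_fst,
      Option.map_some]
  · rw [List.getLast?_map, Option.map_map, Prod.map_snd', ← Option.map_map, h.getLast_snd,
      Option.map_some]

lemma shift (h : IsBipartitePath L A B D x y) (s t : ℤ) :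
    IsBipartitePath (L.map (Prod.map (· + s) (· + t))) (A.map (· + s)) (B.map (· + t))
      (D.map (· + (t - s))) (x + s) (y + t) :=
  h.map _ _ _ fun _ _ => by ring

end IsBipartitePath

/-- The normalized α-labelings: both parts are `[0, n]` and the path runs from `i` to `i`. -/
def IsAlpha (n i : ℤ) (L : List (ℤ × ℤ)) : Prop :=
  IsBipartitePath L (Multiset.Icc 0 n) (Multiset.Icc 0 n) (Multiset.Icc (-n) n) i i

lemma isAlpha_of_isBipartitePath {n i : ℤ} {L : List (ℤ × ℤ)} {A B D : Multiset ℤ} {x y : ℤ}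
    (h : IsBipartitePath L A B D x y) (hA : A = Multiset.Icc 0 n) (hB : B = Multiset.Icc 0 n)
    (hD : D = Multiset.Icc (-n) n) (hx : x = i) (hy : y = i) : IsAlpha n i L := by
  subst hA hB hD hx hy
  exact h

lemma IsAlpha.nonneg_and_le {n i : ℤ} {L : List (ℤ × ℤ)} (h : IsAlpha n i L) :
    0 ≤ i ∧ i ≤ n := by
  obtain ⟨p, hp, rfl⟩ := Option.map_eq_some_iff.1 h.head_fst
  have : p.1 ∈ (L.map Prod.fst : Multiset ℤ) :=
    Multiset.mem_coe.2 (List.mem_map_of_mem (List.mem_of_mem_head? hp))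
  rwa [h.fst_eq, Multiset.mem_Icc] at this

lemma exists_isAlpha_self : ∀ n : ℕ, ∃ L, IsAlpha n n L
  | 0 => ⟨[(0, 0)], by simpa [IsAlpha] using IsBipartitePath.singleton 0 0⟩
  | n + 1 => by
    obtain ⟨L, hL⟩ := exists_isAlpha_self n
    have h := (hL.shift 1 0).append (.singleton 0 ((n : ℤ) + 1))
    refine ⟨_, isAlpha_of_isBipartitePath h ?_ ?_ ?_ (by push_cast; ring) (by push_cast; ring)⟩
    all_goals
      ext a
      simp only [Multiset.map_add_right_Icc, Multiset.count_cons, Multiset.count_add,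
        Multiset.count_singleton, Multiset.count_Icc]
      push_cast
      split_ifs <;> omega

lemma exists_isAlpha_two_mul : ∀ j : ℕ, ∃ L, IsAlpha (2 * j) j L
  | 0 => by simpa using exists_isAlpha_self 0
  | j + 1 => by
    obtain ⟨Z, hZ⟩ := exists_isAlpha_self j
    have h := ((hZ.shift 1 (j + 2)).append (.singleton 0 0)).append (hZ.shift (j + 2) 1)
    refine ⟨_, isAlpha_of_isBipartitePath h ?_ ?_ ?_ (by push_cast; ring) (by push_cast; ring)⟩
    all_goals
      ext a
      simp only [Multiset.map_add_right_Icc, Multiset.count_cons, Multiset.count_add,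
        Multiset.count_singleton, Multiset.count_Icc]
      push_cast
      split_ifs <;> omega

lemma IsAlpha.append_shift {m i : ℤ} {G Z : List (ℤ × ℤ)} (hG : IsAlpha m i G)
    (hZ : IsAlpha i i Z) :
    IsAlpha (m + i + 1) i
      (G.map (Prod.map (· + 0) (· + (i + 1))) ++ Z.map (Prod.map (· + (m + 1)) (· + 0))) := by
  have h := (hG.shift 0 (i + 1)).append (hZ.shift (m + 1) 0)
  have := hG.nonneg_and_le
  refine isAlpha_of_isBipartitePath h ?_ ?_ ?_ (by ring) (by ring)
  all_goals
    ext a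
    simp only [Multiset.map_add_right_Icc, Multiset.count_cons, Multiset.count_add,
      Multiset.count_Icc]
    split_ifs <;> omega

lemma IsAlpha.reflect {n i : ℤ} {L : List (ℤ × ℤ)} (h : IsAlpha n i L) :
    IsAlpha n (n - i) (L.map (Prod.map (n - ·) (n - ·))) := by
  refine isAlpha_of_isBipartitePath (h.map _ _ Neg.neg fun _ _ => by ring) ?_ ?_ ?_ rfl rfl
  · rw [Multiset.map_sub_left_Icc, sub_self, sub_zero]
  · rw [Multiset.map_sub_left_Icc, sub_self, sub_zero]
  · rw [Multiset.map_neg_Icc, neg_neg]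

theorem exists_isAlpha (n : ℕ) : ∀ i : ℤ, 0 ≤ i → i ≤ n → ∃ L, IsAlpha n i L := by
  induction n using Nat.strong_induction_on with
  | _ n ih =>
  have lower_half : ∀ j : ℕ, 2 * j ≤ n → ∃ L, IsAlpha n j L := by
    intro j hj
    rcases hj.eq_or_lt with rfl | hlt
    · simpa using exists_isAlpha_two_mul j
    obtain ⟨G, hG⟩ := ih (n - j - 1) (by omega) j (by omega) (by omega)
    obtain ⟨Z, hZ⟩ := exists_isAlpha_self j
    have h := hG.append_shift hZ
    rw [show ((n - j - 1 : ℕ) : ℤ) + j + 1 = n by omega] at h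
    exact ⟨_, h⟩
  intro i hi hin
  lift i to ℕ using hi
  rcases le_or_gt (2 * i) n with h | h
  · exact lower_half i h
  · obtain ⟨L, hL⟩ := lower_half (n - i) (by omega)
    have h := hL.reflect
    rw [show (n : ℤ) - ((n - i : ℕ) : ℤ) = i by omega] at h
    exact ⟨_, h⟩

lemma toPath_cons (p : ℤ × ℤ) (L : List (ℤ × ℤ)) : toPath (p :: L) = p.1 :: p.2 :: toPath L :=
  rfl

lemma coe_toPath : ∀ L : List (ℤ × ℤ),
    (toPath L : Multiset ℤ) = (L.map Prod.fst : Multiset ℤ) + (L.map Prod.snd : Multiset ℤ)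
  | [] => rfl
  | p :: L => by
    simp only [toPath_cons, List.map_cons, ← Multiset.cons_coe, coe_toPath L,
      Multiset.cons_add, Multiset.add_cons]
    exact Multiset.cons_swap _ _ _

lemma head?_toPath (L : List (ℤ × ℤ)) : (toPath L).head? = L.head?.map Prod.fst := by
  cases L <;> rfl

lemma getLast?_toPath : ∀ L : List (ℤ × ℤ), (toPath L).getLast? = L.getLast?.map Prod.snd
  | [] => rfl
  | [_] => rfl
  | p :: q :: t => by
    show (p.1 :: p.2 :: toPath (q :: t)).getLast? = _
    rw [List.getLast?_cons_cons, toPath_cons, List.getLast?_cons_cons, ← toPath_cons,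
      getLast?_toPath (q :: t), List.getLast?_cons_cons]

lemma pathEdges_toPath_cons_cons (p q : ℤ × ℤ) (t : List (ℤ × ℤ)) :
    pathEdges (toPath (p :: q :: t)) = (p.1, p.2) ::ₘ (p.2, q.1) ::ₘ pathEdges (toPath (q :: t)) :=
  rfl

lemma diffs_pathEdges_toPath :
    ∀ L : List (ℤ × ℤ), diffs (pathEdges (toPath L)) = (signedDiffs L).map abs
  | [] => rfl
  | [p] => by simp [diffs, pathEdges, toPath, signedDiffs, abs_sub_comm]
  | p :: q :: t => by
    have ih := diffs_pathEdges_toPath (q :: t)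
    simp only [diffs] at ih ⊢
    rw [pathEdges_toPath_cons_cons, signedDiffs, Multiset.map_cons, Multiset.map_cons, ih,
      Multiset.map_cons, Multiset.map_cons, abs_sub_comm p.1]

lemma mem_pathEdges_toPath : ∀ (L : List (ℤ × ℤ)), ∀ e ∈ pathEdges (toPath L),
    (e.1 ∈ L.map Prod.fst ∧ e.2 ∈ L.map Prod.snd) ∨ (e.1 ∈ L.map Prod.snd ∧ e.2 ∈ L.map Prod.fst)
  | [] => by simp [pathEdges, toPath]
  | [p] => by simp [pathEdges, toPath]
  | p :: q :: t => by
    intro e he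
    rw [pathEdges_toPath_cons_cons, Multiset.mem_cons, Multiset.mem_cons] at he
    rcases he with rfl | rfl | he
    · simp
    · simp
    · rcases mem_pathEdges_toPath (q :: t) e he with h | h <;> simp_all

lemma IsBipartitePath.toPath_alphaLabeling {L : List (ℤ × ℤ)} {A B : Finset ℤ} {D : Multiset ℤ}
    {x y : ℤ} (h : IsBipartitePath L A.val B.val D x y) (hAB : Disjoint A B)
    (hD : ∀ d ∈ D, 0 ≤ d) :
    (toPath L : Multiset ℤ) = (A ∪ B).val ∧
      (∀ e ∈ pathEdges (toPath L), (e.1 ∈ A ∧ e.2 ∈ B) ∨ (e.1 ∈ B ∧ e.2 ∈ A)) ∧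
      diffs (pathEdges (toPath L)) = D ∧
      (toPath L).head? = some x ∧ (toPath L).getLast? = some y := by
  refine ⟨?_, fun e he => ?_, ?_, ?_, ?_⟩
  · rw [coe_toPath, h.fst_eq, h.snd_eq, ← Finset.disjUnion_eq_union _ _ hAB]
    rfl
  · have he' := mem_pathEdges_toPath L e he
    rwa [← Multiset.mem_coe, ← Multiset.mem_coe, ← Multiset.mem_coe, ← Multiset.mem_coe,
      h.fst_eq, h.snd_eq] at he'
  · rw [diffs_pathEdges_toPath, h.signedDiffs_eq, Multiset.map_congr rfl fun d hd =>
      abs_of_nonneg (hD d hd), Multiset.map_id']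
  · rw [head?_toPath, h.head_fst]
  · rw [getLast?_toPath, h.getLast_snd]

end PathAlphaLabeling

open PathAlphaLabeling in
/-- α-labelings of paths (the case `γ₁ = γ₂` of Abrham's lemma). -/
theorem stmt5 (γ₁ γ₂ : ℕ) (w₁ w₂ : ℤ) (hγ : γ₁ = γ₂) (hw : w₁ + (γ₁ : ℤ) < w₂)
    (i : ℕ) (hi : i ≤ γ₁) :
    ∃ P : List ℤ,
      P.length = γ₁ + γ₂ + 2 ∧
      (↑P : Multiset ℤ)
        = (Finset.Icc w₁ (w₁ + (γ₁ : ℤ)) ∪ Finset.Icc w₂ (w₂ + (γ₂ : ℤ))).val ∧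
      (∀ p ∈ pathEdges P,
        (p.1 ∈ Finset.Icc w₁ (w₁ + (γ₁ : ℤ)) ∧ p.2 ∈ Finset.Icc w₂ (w₂ + (γ₂ : ℤ))) ∨
        (p.1 ∈ Finset.Icc w₂ (w₂ + (γ₂ : ℤ)) ∧ p.2 ∈ Finset.Icc w₁ (w₁ + (γ₁ : ℤ)))) ∧
      diffs (pathEdges P) = (Finset.Icc (w₂ - (w₁ + (γ₁ : ℤ))) (w₂ + (γ₂ : ℤ) - w₁)).val ∧
      P.head? = some (w₁ + (i : ℤ)) ∧ P.getLast? = some (w₂ + (i : ℤ)) := by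
  subst hγ
  obtain ⟨L, hL⟩ := exists_isAlpha γ₁ i (by positivity) (by exact_mod_cast hi)
  have h := hL.map (w₁ + ·) (w₂ + ·) (w₂ - w₁ + ·) fun _ _ => by ring
  simp only [Multiset.map_add_left_Icc, add_zero] at h
  have hdisj : Disjoint (Finset.Icc w₁ (w₁ + γ₁)) (Finset.Icc w₂ (w₂ + γ₁)) :=
    Finset.disjoint_left.2 fun x hx hx' => by
      rw [Finset.mem_Icc] at hx hx'
      omega
  obtain ⟨hverts, hedges, hdiffs, hhead, hlast⟩ := h.toPath_alphaLabeling hdisj fun d hd => by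
    rw [Multiset.mem_Icc] at hd
    omega
  refine ⟨_, ?_, hverts, hedges, ?_, hhead, hlast⟩
  · rw [← Multiset.coe_card, hverts, Finset.card_val, Finset.card_union_of_disjoint hdisj,
      Int.card_Icc, Int.card_Icc]
    omega
  · rw [hdiffs]
    congr 1 <;> ring
end

section
/- Let L = {ℓ₀,…,ℓ_t} be a nonempty multiset of even integers each at least 4, set ε = 2(t+1)(max(L)+3) − 1 and m = ε − Σ_{ℓ∈L} ℓ. Assume for each i there exists an α-labeling Γ_i of the disjoint union of an ℓ_i-cycle and a (k−ℓ_i)-path with k = 2max(L)+5, having parts [0, (k−1)/2] and [(k+1)/2, k] and path end-vertices (k−1)/4 and 3(k−1)/4+1. Then there exists an α-labeling of the disjoint union of one cycle of each length in L and an m-path, with parts the intervals [0, (ε−1)/2] and [(ε+1)/2, ε], edge differences exactly {1,…,ε}, and path end-vertices max(L)/2 + 1 and (ε + max(L) + 3)/2. -/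
/-!
Two α-labelings of odd sizes `2n - 1` and `2m - 1` whose paths run from `h` to `n + h`, resp.
from `h` to `m + h`, glue into one of size `2(n + m) - 1`: keep the low part of the first, lift its
high part by `2m`, and translate the second by `n`. The differences of the first move to
`[2m + 1, 2m + 2n - 1]`, those of the second stay `[1, 2m - 1]`, and the missing difference `2m` is
realised by the new edge from the lifted end `n + h + 2m` of the first path to the translated start
`h + n` of the second. Gluing the blocks (`n = M + 3`, `h = M/2 + 1`) one after the other gives
the theorem.
-/

/-- Edges of a cycle given by the list of its vertices (in cyclic order). -/
def cycleEdges (l : List ℤ) : Multiset (ℤ × ℤ) := ↑(l.zip (l.rotate 1))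

theorem List.foldr_max_mem {α : Type*} [LinearOrder α] (a : α) (l : List α) :
    l.foldr max a ∈ a :: l := by
  induction l with
  | nil => exact List.mem_singleton_self a
  | cons x l ih =>
    rw [List.foldr_cons]
    rcases max_choice x (l.foldr max a) with h | h <;> rw [h]
    · simp
    · rcases List.mem_cons.1 ih with h' | h' <;> simp [h']

theorem Multiset.Icc_add_Icc_of_eq {a b c d : ℤ} (hc : c = b + 1) (hac : a ≤ c) (hbd : b ≤ d) :
    Icc a b + Icc c d = Icc a d := by
  subst hc
  simp only [Multiset.Icc, ← Finset.Ico_add_one_right_eq_Icc]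
  exact Multiset.Ico_add_Ico_eq_Ico hac (by omega)

theorem pathEdges_cons_cons (x y : ℤ) (l : List ℤ) :
    pathEdges (x :: y :: l) = (x, y) ::ₘ pathEdges (y :: l) := rfl

theorem pathEdges_append {P Q : List ℤ} {x y : ℤ} (hx : P.getLast? = some x)
    (hy : Q.head? = some y) :
    pathEdges (P ++ Q) = (x, y) ::ₘ (pathEdges P + pathEdges Q) := by
  obtain ⟨Q, rfl⟩ : ∃ Q', Q = y :: Q' := List.head?_eq_some_iff.1 hy
  induction P with
  | nil => simp at hx
  | cons p P ih =>
    cases P with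
    | nil =>
      obtain rfl : p = x := by simpa using hx
      simp [pathEdges]
    | cons p' P =>
      rw [List.getLast?_cons_cons] at hx
      rw [List.cons_append, List.cons_append, pathEdges_cons_cons, ← List.cons_append, ih hx,
        pathEdges_cons_cons, Multiset.cons_add, Multiset.cons_swap]

theorem cycleEdges_map (f : ℤ → ℤ) (C : List ℤ) :
    cycleEdges (C.map f) = (cycleEdges C).map (Prod.map f f) := by
  simp [cycleEdges, ← List.map_rotate, List.zip_map]

theorem pathEdges_map (f : ℤ → ℤ) (P : List ℤ) :
    pathEdges (P.map f) = (pathEdges P).map (Prod.map f f) := by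
  simp [pathEdges, ← List.map_tail, List.zip_map]

def edges (cycles : List (List ℤ)) (path : List ℤ) : Multiset (ℤ × ℤ) :=
  (cycles.map cycleEdges).sum + pathEdges path

theorem edges_map (f : ℤ → ℤ) (cycles : List (List ℤ)) (path : List ℤ) :
    edges (cycles.map (List.map f)) (path.map f) = (edges cycles path).map (Prod.map f f) := by
  induction cycles with
  | nil => simp [edges, pathEdges_map]
  | cons C cycles ih =>
    simp_all [edges, cycleEdges_map, add_assoc]

theorem edges_append {cs ds : List (List ℤ)} {P Q : List ℤ} {x y : ℤ}
    (hx : P.getLast? = some x) (hy : Q.head? = some y) :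
    edges (cs ++ ds) (P ++ Q) = (x, y) ::ₘ (edges cs P + edges ds Q) := by
  rw [edges, pathEdges_append hx hy, edges, edges, List.map_append, List.sum_append]
  simp only [Multiset.add_cons]
  abel_nf

def IsBipartiteWith (E : Multiset (ℤ × ℤ)) (A B : Finset ℤ) : Prop :=
  ∀ p ∈ E, (p.1 ∈ A ∧ p.2 ∈ B) ∨ (p.1 ∈ B ∧ p.2 ∈ A)

namespace IsBipartiteWith

variable {E F : Multiset (ℤ × ℤ)} {A B A' B' : Finset ℤ}

theorem mono (h : IsBipartiteWith E A B) (hA : A ⊆ A') (hB : B ⊆ B') :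
    IsBipartiteWith E A' B' := fun p hp => by
  rcases h p hp with ⟨h1, h2⟩ | ⟨h1, h2⟩
  exacts [Or.inl ⟨hA h1, hB h2⟩, Or.inr ⟨hB h1, hA h2⟩]

theorem add (hE : IsBipartiteWith E A B) (hF : IsBipartiteWith F A B) :
    IsBipartiteWith (E + F) A B := fun p hp =>
  (Multiset.mem_add.1 hp).elim (hE p) (hF p)

theorem cons {x y : ℤ} (h : (x ∈ A ∧ y ∈ B) ∨ (x ∈ B ∧ y ∈ A)) (hE : IsBipartiteWith E A B) :
    IsBipartiteWith ((x, y) ::ₘ E) A B := fun p hp =>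
  (Multiset.mem_cons.1 hp).elim (fun hp => hp ▸ h) (hE p)

end IsBipartiteWith

structure IsAlphaLabeling (ε : ℤ) (cycles : List (List ℤ)) (path : List ℤ) : Prop where
  vertices : (↑(cycles.flatten ++ path) : Multiset ℤ) = Multiset.Icc 0 ε
  isBipartiteWith :
    IsBipartiteWith (edges cycles path) (Finset.Icc 0 ((ε - 1) / 2)) (Finset.Icc ((ε + 1) / 2) ε)
  diffs_eq : diffs (edges cycles path) = Multiset.Icc 1 ε

theorem isAlphaLabeling_singleton {ε : ℤ} {C P : List ℤ}
    (hV : (↑(C ++ P) : Multiset ℤ) = Multiset.Icc 0 ε)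
    (hB : IsBipartiteWith (cycleEdges C + pathEdges P) (Finset.Icc 0 ((ε - 1) / 2))
      (Finset.Icc ((ε + 1) / 2) ε))
    (hD : diffs (cycleEdges C + pathEdges P) = Multiset.Icc 1 ε) :
    IsAlphaLabeling ε [C] P := by
  have hE : edges [C] P = cycleEdges C + pathEdges P := by simp [edges]
  exact ⟨by simpa using hV, hE ▸ hB, hE ▸ hD⟩

def splitShift (n a b x : ℤ) : ℤ := if x < n then x + a else x + b

theorem abs_splitShift_sub {n a b x y : ℤ} (hab : a ≤ b) (hx : x < n) (hy : n ≤ y) :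
    |splitShift n a b y - splitShift n a b x| = |y - x| + (b - a) := by
  simp only [splitShift, if_pos hx, if_neg (not_lt.2 hy)]
  rw [abs_of_nonneg (by omega), abs_of_nonneg (by omega)]
  ring

namespace IsAlphaLabeling

variable {n m a b h : ℤ} {cycles cs ds : List (List ℤ)} {path P Q : List ℤ}

theorem isBipartiteWith_of_odd (hα : IsAlphaLabeling (2 * n - 1) cycles path) :
    IsBipartiteWith (edges cycles path) (Finset.Icc 0 (n - 1)) (Finset.Icc n (2 * n - 1)) := by
  simpa [show (2 * n - 1 - 1) / 2 = n - 1 by omega, show (2 * n - 1 + 1) / 2 = n by omega]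
    using hα.isBipartiteWith

theorem vertices_map_splitShift (hα : IsAlphaLabeling (2 * n - 1) cycles path) (hn : 0 ≤ n) :
    (↑((cycles.map (List.map (splitShift n a b))).flatten ++ path.map (splitShift n a b)) :
      Multiset ℤ) = Multiset.Icc (0 + a) (n - 1 + a) + Multiset.Icc (n + b) (2 * n - 1 + b) := by
  rw [← List.map_flatten, ← List.map_append, ← Multiset.map_coe, hα.vertices,
    ← Multiset.Icc_add_Icc_of_eq (b := n - 1) (c := n) (by ring) (by omega) (by omega),
    Multiset.map_add, ← Multiset.map_add_right_Icc, ← Multiset.map_add_right_Icc]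
  congr 1 <;> refine Multiset.map_congr rfl fun x hx => ?_ <;>
    rw [Multiset.mem_Icc] at hx <;> simp only [splitShift] <;> split_ifs <;> omega

theorem isBipartiteWith_map_splitShift (hα : IsAlphaLabeling (2 * n - 1) cycles path) :
    IsBipartiteWith (edges (cycles.map (List.map (splitShift n a b))) (path.map (splitShift n a b)))
      (Finset.Icc a (n - 1 + a)) (Finset.Icc (n + b) (2 * n - 1 + b)) := by
  rw [edges_map]
  intro p hp
  obtain ⟨q, hq, rfl⟩ := Multiset.mem_map.1 hp
  have := hα.isBipartiteWith_of_odd q hq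
  simp only [Finset.mem_Icc, Prod.map_fst, Prod.map_snd, splitShift] at this ⊢
  split_ifs <;> omega

theorem diffs_map_splitShift (hα : IsAlphaLabeling (2 * n - 1) cycles path) (hab : a ≤ b) :
    diffs (edges (cycles.map (List.map (splitShift n a b))) (path.map (splitShift n a b))) =
      Multiset.Icc (1 + (b - a)) (2 * n - 1 + (b - a)) := by
  have hshift : ∀ q ∈ edges cycles path,
      |splitShift n a b q.1 - splitShift n a b q.2| = |q.1 - q.2| + (b - a) := by
    intro q hq
    rcases hα.isBipartiteWith_of_odd q hq with ⟨h1, h2⟩ | ⟨h1, h2⟩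
    · rw [Finset.mem_Icc] at h1 h2
      rw [abs_sub_comm, abs_splitShift_sub hab (by omega) (by omega), abs_sub_comm]
    · rw [Finset.mem_Icc] at h1 h2
      exact abs_splitShift_sub hab (by omega) (by omega)
  rw [edges_map, diffs, Multiset.map_map, ← Multiset.map_add_right_Icc, ← hα.diffs_eq, diffs,
    Multiset.map_map]
  exact Multiset.map_congr rfl hshift

theorem vertices_glue (hX : IsAlphaLabeling (2 * n - 1) cs P)
    (hY : IsAlphaLabeling (2 * m - 1) ds Q) (hn : 0 < n) (hm : 0 < m) :
    (↑((cs.map (List.map (splitShift n 0 (2 * m))) ++ ds.map (List.map (splitShift m n n))).flatten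
      ++ (P.map (splitShift n 0 (2 * m)) ++ Q.map (splitShift m n n))) : Multiset ℤ) =
      Multiset.Icc 0 (2 * (n + m) - 1) := by
  calc _ = Multiset.Icc (0 + 0) (n - 1 + 0) + Multiset.Icc (0 + n) (m - 1 + n) +
          Multiset.Icc (m + n) (2 * m - 1 + n) + Multiset.Icc (n + 2 * m) (2 * n - 1 + 2 * m) := by
        simp only [List.flatten_append, ← Multiset.coe_add]
        rw [add_add_add_comm, Multiset.coe_add, Multiset.coe_add, hX.vertices_map_splitShift hn.le,
          hY.vertices_map_splitShift hm.le]
        abel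
    _ = Multiset.Icc 0 (2 * (n + m) - 1) := by
        rw [Multiset.Icc_add_Icc_of_eq, Multiset.Icc_add_Icc_of_eq, Multiset.Icc_add_Icc_of_eq]
        · congr 1; ring
        all_goals omega

theorem glue (hX : IsAlphaLabeling (2 * n - 1) cs P) (hY : IsAlphaLabeling (2 * m - 1) ds Q)
    (h0 : 0 ≤ h) (hn : h < n) (hm : h < m)
    (hPh : P.head? = some h) (hPl : P.getLast? = some (n + h))
    (hQh : Q.head? = some h) (hQl : Q.getLast? = some (m + h)) :
    ∃ cycles path, cycles.map List.length = cs.map List.length ++ ds.map List.length ∧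
      IsAlphaLabeling (2 * (n + m) - 1) cycles path ∧
      path.head? = some h ∧ path.getLast? = some (n + m + h) := by
  set f := splitShift n 0 (2 * m)
  set g := splitShift m n n
  have hf_head : (P.map f).head? = some h := by
    simp [hPh, f, splitShift, hn]
  have hf_last : (P.map f).getLast? = some (n + h + 2 * m) := by
    simp [hPl, f, splitShift, h0]
  have hg_head : (Q.map g).head? = some (h + n) := by
    simp [hQh, g, splitShift]
  have hg_last : (Q.map g).getLast? = some (n + m + h) := by
    simp [hQl, g, splitShift]; ring
  have hedges := edges_append (cs := cs.map (List.map f)) (ds := ds.map (List.map g))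
    hf_last hg_head
  refine ⟨cs.map (List.map f) ++ ds.map (List.map g), P.map f ++ Q.map g,
    by simp [Function.comp_def], ⟨?_, ?_, ?_⟩, by simp [List.head?_append, hf_head],
    by simp [List.getLast?_append, hg_last]⟩
  · exact hX.vertices_glue hY (by omega) (by omega)
  · rw [hedges]
    refine .cons (Or.inr ⟨?_, ?_⟩) (.add ?_ ?_)
    · simp only [Finset.mem_Icc]; omega
    · simp only [Finset.mem_Icc]; omega
    · exact hX.isBipartiteWith_map_splitShift.mono (Finset.Icc_subset_Icc (by omega) (by omega))
        (Finset.Icc_subset_Icc (by omega) (by omega))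
    · exact hY.isBipartiteWith_map_splitShift.mono (Finset.Icc_subset_Icc (by omega) (by omega))
        (Finset.Icc_subset_Icc (by omega) (by omega))
  · rw [hedges, diffs, Multiset.map_cons, Multiset.map_add, ← diffs, ← diffs,
      hX.diffs_map_splitShift (by omega), hY.diffs_map_splitShift le_rfl,
      show |n + h + 2 * m - (h + n)| = 2 * m by rw [abs_of_nonneg (by omega)]; ring]
    calc _ = Multiset.Icc (1 + (n - n)) (2 * m - 1 + (n - n)) + Multiset.Icc (2 * m) (2 * m) +
          Multiset.Icc (1 + (2 * m - 0)) (2 * n - 1 + (2 * m - 0)) := by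
          rw [Multiset.Icc_self, ← Multiset.singleton_add]; abel
      _ = Multiset.Icc 1 (2 * (n + m) - 1) := by
          rw [Multiset.Icc_add_Icc_of_eq, Multiset.Icc_add_Icc_of_eq]
          · congr 1 <;> ring
          all_goals omega

end IsAlphaLabeling

theorem exists_isAlphaLabeling_of_blocks {n h : ℤ} (h0 : 0 ≤ h) (hn : h < n) {ℓs : List ℕ}
    (hne : ℓs ≠ [])
    (hblocks : ∀ l ∈ ℓs, ∃ C P : List ℤ, C.length = l ∧ IsAlphaLabeling (2 * n - 1) [C] P ∧
      P.head? = some h ∧ P.getLast? = some (n + h)) :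
    ∃ cycles path, cycles.map List.length = ℓs ∧
      IsAlphaLabeling (2 * (ℓs.length * n) - 1) cycles path ∧
      path.head? = some h ∧ path.getLast? = some (ℓs.length * n + h) := by
  induction ℓs with
  | nil => exact absurd rfl hne
  | cons l ℓs ih =>
    obtain ⟨C, P, hC, hX, hPh, hPl⟩ := hblocks l List.mem_cons_self
    rcases eq_or_ne ℓs [] with rfl | hℓs
    · exact ⟨[C], P, by simp [hC], by simpa using hX, hPh, by simpa using hPl⟩
    obtain ⟨ds, Q, hds, hY, hQh, hQl⟩ :=
      ih hℓs fun l hl => hblocks l (List.mem_cons_of_mem _ hl)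
    have hlen : (1 : ℤ) ≤ ℓs.length := by
      exact_mod_cast List.length_pos_iff.2 hℓs
    obtain ⟨cycles, path, hlens, hα, hhead, hlast⟩ :=
      hX.glue hY h0 hn (by nlinarith) hPh hPl hQh hQl
    have hsize : ((l :: ℓs).length : ℤ) * n = n + ℓs.length * n := by
      rw [List.length_cons]; push_cast; ring
    exact ⟨cycles, path, by simp [hlens, hC, hds], hsize ▸ hα, hhead, hsize ▸ hlast⟩

theorem stmt18_general (ℓs : List ℕ)
    (heven : ∀ l ∈ ℓs, Even l)
    (M k ε : ℕ) (hM : M = ℓs.foldr max 0) (hk : k = 2 * M + 5)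
    (hε : ε + 1 = 2 * ℓs.length * (M + 3))
    (hblocks : ∀ l ∈ ℓs, ∃ C P : List ℤ,
      C.length = l ∧ C.length + P.length = k + 1 ∧
      (↑(C ++ P) : Multiset ℤ) = (Finset.Icc (0 : ℤ) (k : ℤ)).val ∧
      (∀ p ∈ cycleEdges C + pathEdges P,
        (p.1 ∈ Finset.Icc (0 : ℤ) (((k : ℤ) - 1) / 2) ∧
          p.2 ∈ Finset.Icc (((k : ℤ) + 1) / 2) (k : ℤ)) ∨
        (p.1 ∈ Finset.Icc (((k : ℤ) + 1) / 2) (k : ℤ) ∧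
          p.2 ∈ Finset.Icc (0 : ℤ) (((k : ℤ) - 1) / 2))) ∧
      diffs (cycleEdges C + pathEdges P) = (Finset.Icc (1 : ℤ) (k : ℤ)).val ∧
      P.head? = some (((k : ℤ) - 1) / 4) ∧
      P.getLast? = some (3 * (((k : ℤ) - 1) / 4) + 1)) :
    ∃ (cycles : List (List ℤ)) (path : List ℤ),
      (↑(cycles.map List.length) : Multiset ℕ) = (↑ℓs : Multiset ℕ) ∧
      (↑(cycles.flatten ++ path) : Multiset ℤ) = (Finset.Icc (0 : ℤ) (ε : ℤ)).val ∧
      (∀ p ∈ (cycles.map cycleEdges).sum + pathEdges path,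
        (p.1 ∈ Finset.Icc (0 : ℤ) (((ε : ℤ) - 1) / 2) ∧
          p.2 ∈ Finset.Icc (((ε : ℤ) + 1) / 2) (ε : ℤ)) ∨
        (p.1 ∈ Finset.Icc (((ε : ℤ) + 1) / 2) (ε : ℤ) ∧
          p.2 ∈ Finset.Icc (0 : ℤ) (((ε : ℤ) - 1) / 2))) ∧
      diffs ((cycles.map cycleEdges).sum + pathEdges path)
        = (Finset.Icc (1 : ℤ) (ε : ℤ)).val ∧
      path.head? = some ((M : ℤ) / 2 + 1) ∧
      path.getLast? = some (((ε : ℤ) + (M : ℤ) + 3) / 2) := by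
  have hne : ℓs ≠ [] := by
    rintro rfl
    simp at hε
  obtain ⟨j, hj⟩ : Even M := by
    rcases List.mem_cons.1 (hM ▸ List.foldr_max_mem 0 ℓs) with h | h
    exacts [h ▸ Even.zero, heven M h]
  have hkZ : (k : ℤ) = 2 * ((M : ℤ) + 3) - 1 := by
    rw [hk]; push_cast; ring
  obtain ⟨cycles, path, hlens, hα, hhead, hlast⟩ :=
    exists_isAlphaLabeling_of_blocks (n := (M : ℤ) + 3) (h := (M : ℤ) / 2 + 1) (by omega)
      (by omega) hne fun l hl => by
        obtain ⟨C, P, hC, -, hV, hB, hD, hPh, hPl⟩ := hblocks l hl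
        refine ⟨C, P, hC, ?_, ?_, ?_⟩
        · exact hkZ ▸ isAlphaLabeling_singleton hV hB hD
        · rwa [show ((k : ℤ) - 1) / 4 = (M : ℤ) / 2 + 1 by omega] at hPh
        · rwa [show 3 * (((k : ℤ) - 1) / 4) + 1 = (M : ℤ) + 3 + ((M : ℤ) / 2 + 1) by omega] at hPl
  have hεZ : (ε : ℤ) = 2 * (ℓs.length * ((M : ℤ) + 3)) - 1 := by
    zify at hε
    linarith
  rw [hεZ]
  refine ⟨cycles, path, by rw [hlens], hα.vertices, hα.isBipartiteWith,
    hα.diffs_eq, hhead, ?_⟩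
  rw [hlast]
  generalize (ℓs.length : ℤ) * ((M : ℤ) + 3) = W
  congr 1
  omega

/-- the gluing construction for α-labelings with only even cycles.
Here `M = max L`, `k = 2M + 5`, `ε = 2|L|(M+3) - 1` and `m = ε - Σ L`. -/
theorem stmt18 (ℓs : List ℕ) (hne : ℓs ≠ [])
    (heven : ∀ l ∈ ℓs, Even l) (hge : ∀ l ∈ ℓs, 4 ≤ l)
    (M k ε : ℕ) (hM : M = ℓs.foldr max 0) (hk : k = 2 * M + 5)
    (hε : ε + 1 = 2 * ℓs.length * (M + 3))
    (hblocks : ∀ l ∈ ℓs, ∃ C P : List ℤ,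
      C.length = l ∧ C.length + P.length = k + 1 ∧
      (↑(C ++ P) : Multiset ℤ) = (Finset.Icc (0 : ℤ) (k : ℤ)).val ∧
      (∀ p ∈ cycleEdges C + pathEdges P,
        (p.1 ∈ Finset.Icc (0 : ℤ) (((k : ℤ) - 1) / 2) ∧
          p.2 ∈ Finset.Icc (((k : ℤ) + 1) / 2) (k : ℤ)) ∨
        (p.1 ∈ Finset.Icc (((k : ℤ) + 1) / 2) (k : ℤ) ∧
          p.2 ∈ Finset.Icc (0 : ℤ) (((k : ℤ) - 1) / 2))) ∧
      diffs (cycleEdges C + pathEdges P) = (Finset.Icc (1 : ℤ) (k : ℤ)).val ∧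
      P.head? = some (((k : ℤ) - 1) / 4) ∧
      P.getLast? = some (3 * (((k : ℤ) - 1) / 4) + 1)) :
    ∃ (cycles : List (List ℤ)) (path : List ℤ),
      (↑(cycles.map List.length) : Multiset ℕ) = (↑ℓs : Multiset ℕ) ∧
      (↑(cycles.flatten ++ path) : Multiset ℤ) = (Finset.Icc (0 : ℤ) (ε : ℤ)).val ∧
      (∀ p ∈ (cycles.map cycleEdges).sum + pathEdges path,
        (p.1 ∈ Finset.Icc (0 : ℤ) (((ε : ℤ) - 1) / 2) ∧
          p.2 ∈ Finset.Icc (((ε : ℤ) + 1) / 2) (ε : ℤ)) ∨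
        (p.1 ∈ Finset.Icc (((ε : ℤ) + 1) / 2) (ε : ℤ) ∧
          p.2 ∈ Finset.Icc (0 : ℤ) (((ε : ℤ) - 1) / 2))) ∧
      diffs ((cycles.map cycleEdges).sum + pathEdges path)
        = (Finset.Icc (1 : ℤ) (ε : ℤ)).val ∧
      path.head? = some ((M : ℤ) / 2 + 1) ∧
      path.getLast? = some (((ε : ℤ) + (M : ℤ) + 3) / 2) :=
  stmt18_general ℓs heven M k ε hM hk hε hblocks
end
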